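/- Let Λ be a normal greedoid over a finite alphabet Σ with an aligned polymatroid representation ρ. Then every closed set S of ρ satisfies κ(S) ⊆ S. -/

import Mathlib

namespace PaperPG

def letters {A : Type*} (w : List A) : Set A := {x | x ∈ w}

/-- A greedoid over alphabet `A`: a nonempty simple hereditary language with exchange. -/
structure Greedoid (A : Type*) where
  lang : Set (List A)
  lang_nonempty : lang.Nonempty
  simple : ∀ w ∈ lang, w.Nodup
  hereditary : ∀ α β : List A, α ++ β ∈ lang → α ∈ lang
  exchange : ∀ α ∈ lang, ∀ β ∈ lang, β.length < α.length →
      ∃ x ∈ letters α, β ++ [x] ∈ lang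

/-- Kernel of a flat: union of the letter sets of its members. -/
def flatKernel {A : Type*} (F : Set (List A)) : Set A := {y : A | ∃ β ∈ F, y ∈ β}

namespace Greedoid

variable {A : Type*} (G : Greedoid A)

/-- `X` is feasible if it is the set of letters of a feasible word. -/
def Feasible (X : Set A) : Prop := ∃ α ∈ G.lang, letters α = X

/-- The interval property. -/
def IntervalProperty : Prop :=
  ∀ X Y Z : Set A, G.Feasible X → G.Feasible Y → G.Feasible Z →
    X ⊆ Y → Y ⊆ Z → ∀ x : A, x ∉ Z →
      G.Feasible (X ∪ {x}) → G.Feasible (Z ∪ {x}) → G.Feasible (Y ∪ {x})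

/-- A loop is a letter occurring in no feasible word. -/
def IsLoop (x : A) : Prop := ∀ α ∈ G.lang, x ∉ α

/-- A greedoid is normal if it has no loops. -/
def Normal : Prop := ∀ x : A, ¬ G.IsLoop x

/-- Greedoid rank: maximum length of a feasible word with letters inside `X`. -/
noncomputable def rank (X : Set A) : ℕ :=
  sSup {n : ℕ | ∃ α ∈ G.lang, letters α ⊆ X ∧ α.length = n}

/-- Greedoid span. -/
def spanR (X : Set A) : Set A := {y : A | G.rank (X ∪ {y}) = G.rank X}

/-- Kernel of a set. -/
def kernel (X : Set A) : Set A :=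
  {y : A | ∃ β ∈ G.lang, letters β ⊆ G.spanR X ∧ y ∈ β}

/-- Continuations of a word. -/
def cont (α : List A) : Set A := {x : A | α ++ [x] ∈ G.lang}

/-- The flat (equivalence class under equal continuations) of a word. -/
def flatOf (α : List A) : Set (List A) := {β ∈ G.lang | G.cont β = G.cont α}

def IsFlat (F : Set (List A)) : Prop := ∃ α ∈ G.lang, F = G.flatOf α


/-- Order on flats: `[α] ⊑ [β]` iff some `αγ ∈ Λ` with `αγ ∼ β`. -/
def flatLE (F F' : Set (List A)) : Prop :=
  ∃ α ∈ F, ∃ γ : List A, α ++ γ ∈ G.lang ∧ (α ++ γ) ∈ F'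

def flatLT (F F' : Set (List A)) : Prop := G.flatLE F F' ∧ F ≠ F'

/-- Covering relation on flats. -/
def flatCovBy (F F' : Set (List A)) : Prop :=
  G.flatLT F F' ∧ ∀ E : Set (List A), G.IsFlat E → G.flatLT F E → G.flatLT E F' → False

/-- `M` is a meet of the flats `F` and `F'`. -/
def IsMeet (M F F' : Set (List A)) : Prop :=
  G.IsFlat M ∧ G.flatLE M F ∧ G.flatLE M F' ∧
    ∀ E : Set (List A), G.IsFlat E → G.flatLE E F → G.flatLE E F' → G.flatLE E M

/-- A basic word: one of maximum length. -/
def Basic (w : List A) : Prop := w ∈ G.lang ∧ ∀ v ∈ G.lang, v.length ≤ w.length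

/-- Optimism: every non-loop is a continuation of some prefix of every basic word. -/
def Optimistic : Prop :=
  ∀ y : A, ¬ G.IsLoop y → ∀ w : List A, G.Basic w →
    ∃ i ≤ w.length, y ∈ G.cont (w.take i)

/-- The greatest representation `ρ♮`. -/
noncomputable def rhoNat (X : Set A) : ℕ :=
  sInf {n : ℕ | ∃ α ∈ G.lang, X ⊆ G.kernel (letters α) ∧ α.length = n}

end Greedoid

/-- A polymatroid rank function: normalized, monotone, submodular. -/
def IsPolymatroid {A : Type*} (ρ : Set A → ℝ) : Prop :=
  ρ ∅ = 0 ∧ (∀ X Y : Set A, X ⊆ Y → ρ X ≤ ρ Y) ∧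
    ∀ X Y : Set A, ρ (X ∪ Y) + ρ (X ∩ Y) ≤ ρ X + ρ Y

/-- `ρ` represents `G`: the language consists exactly of the simple words each of whose
prefixes of length `i` has rank `i`. -/
def Represents {A : Type*} (ρ : Set A → ℝ) (G : Greedoid A) : Prop :=
  ∀ w : List A, w ∈ G.lang ↔
    (w.Nodup ∧ ∀ i : ℕ, i < w.length → ρ (letters (w.take (i + 1))) = (i + 1 : ℝ))

/-- Polymatroid span. -/
def spanP {A : Type*} (ρ : Set A → ℝ) (X : Set A) : Set A :=
  {y : A | ρ (X ∪ {y}) = ρ X}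

/-- Closed sets of a polymatroid. -/
def ClosedP {A : Type*} (ρ : Set A → ℝ) (X : Set A) : Prop := spanP ρ X = X

/-- Covering relation on the closed sets of `ρ`, ordered by inclusion. -/
def closedCovBy {A : Type*} (ρ : Set A → ℝ) (S S' : Set A) : Prop :=
  ClosedP ρ S ∧ ClosedP ρ S' ∧ S ⊂ S' ∧
    ∀ T : Set A, ClosedP ρ T → S ⊂ T → T ⊂ S' → False

/-- Alignment of a representation. -/
def Aligned {A : Type*} (G : Greedoid A) (ρ : Set A → ℝ) : Prop :=
  ∃ φ : Set (List A) → Set A,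
    (∀ F, G.IsFlat F → ClosedP ρ (φ F)) ∧
    (∀ F F', G.IsFlat F → G.IsFlat F' → G.flatLE F F' → φ F ⊆ φ F') ∧
    (∀ α ∈ G.lang, ρ (letters α) = ρ (φ (G.flatOf α))) ∧
    (∀ α ∈ G.lang, letters α ⊆ φ (G.flatOf α)) ∧
    (∀ F F', G.IsFlat F → G.IsFlat F' → G.flatCovBy F F' → closedCovBy ρ (φ F) (φ F'))

/-- The maps `φ* : F ↦ σ_ρ(κ(F))` and `φ_* : S ↦ κ⁻¹(S)` are well-defined order-preserving
maps between the flats of `G` and the closed sets of `ρ` forming a Galois connection in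
which `φ*` preserves the covering relation of the flats. -/
def GaloisPair {A : Type*} (G : Greedoid A) (ρ : Set A → ℝ) : Prop :=
  (∀ F, G.IsFlat F → ClosedP ρ (spanP ρ (flatKernel F))) ∧
  (∀ F F', G.IsFlat F → G.IsFlat F' → G.flatLE F F' →
      spanP ρ (flatKernel F) ⊆ spanP ρ (flatKernel F')) ∧
  (∀ S, ClosedP ρ S → ∃! F, G.IsFlat F ∧ flatKernel F = G.kernel S) ∧
  (∀ S S', ClosedP ρ S → ClosedP ρ S' → S ⊆ S' →
      ∀ F F', G.IsFlat F → flatKernel F = G.kernel S →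
        G.IsFlat F' → flatKernel F' = G.kernel S' → G.flatLE F F') ∧
  (∀ F, G.IsFlat F → ∀ S, ClosedP ρ S → ∀ F', G.IsFlat F' → flatKernel F' = G.kernel S →
      (spanP ρ (flatKernel F) ⊆ S ↔ G.flatLE F F')) ∧
  (∀ F F', G.IsFlat F → G.IsFlat F' → G.flatCovBy F F' →
      closedCovBy ρ (spanP ρ (flatKernel F)) (spanP ρ (flatKernel F')))


section AuxLemmas

open List Set

variable {A : Type*}

/-! ### Letters lemmas -/

lemma letters_append (u v : List A) : letters (u ++ v) = letters u ∪ letters v := by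
  ext z; simp [letters]

lemma letters_singleton (y : A) : letters [y] = ({y} : Set A) := by
  ext z; simp [letters]

lemma letters_nil : letters ([] : List A) = ∅ := by
  ext z; simp [letters]

lemma letters_mono {u v : List A} (h : u <+: v) : letters u ⊆ letters v := by
  obtain ⟨t, rfl⟩ := h
  intro z hz
  simp only [letters, Set.mem_setOf_eq] at *
  exact List.mem_append_left _ hz

lemma letters_take_subset (l : List A) (n : ℕ) : letters (l.take n) ⊆ letters l :=
  letters_mono (List.take_prefix n l)

namespace Greedoid

variable (G : Greedoid A)

/-! ### Basic greedoid lemmas -/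

lemma nil_mem : ([] : List A) ∈ G.lang := by
  obtain ⟨w, hw⟩ := G.lang_nonempty
  exact G.hereditary [] w (by simpa using hw)

lemma take_mem {w : List A} (hw : w ∈ G.lang) (n : ℕ) : w.take n ∈ G.lang :=
  G.hereditary _ (w.drop n) (by rw [List.take_append_drop]; exact hw)

lemma length_le_card [Fintype A] {w : List A} (hw : w ∈ G.lang) :
    w.length ≤ Fintype.card A :=
  (G.simple w hw).length_le_card

lemma rank_bddAbove [Fintype A] (X : Set A) :
    BddAbove {n : ℕ | ∃ α ∈ G.lang, letters α ⊆ X ∧ α.length = n} := by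
  refine ⟨Fintype.card A, ?_⟩
  rintro n ⟨α, hα, -, rfl⟩
  exact G.length_le_card hα

lemma le_rank [Fintype A] {α : List A} {X : Set A} (hα : α ∈ G.lang)
    (h : letters α ⊆ X) : α.length ≤ G.rank X :=
  le_csSup (G.rank_bddAbove X) ⟨α, hα, h, rfl⟩

lemma exists_basic [Fintype A] (X : Set A) :
    ∃ α ∈ G.lang, letters α ⊆ X ∧ α.length = G.rank X := by
  have h0 : (0 : ℕ) ∈ {n : ℕ | ∃ α ∈ G.lang, letters α ⊆ X ∧ α.length = n} :=
    ⟨[], G.nil_mem, by simp [letters_nil], rfl⟩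
  exact Nat.sSup_mem ⟨0, h0⟩ (G.rank_bddAbove X)

lemma extend_to_aux {β : List A} (hβ : β ∈ G.lang) :
    ∀ k : ℕ, ∀ {α : List A}, α ∈ G.lang → α.length + k = β.length →
      ∃ μ ∈ G.lang, α <+: μ ∧ letters μ ⊆ letters α ∪ letters β ∧ μ.length = β.length := by
  intro k
  induction k with
  | zero =>
    intro α hα hl
    exact ⟨α, hα, List.prefix_refl α, fun z hz => Or.inl hz, by omega⟩
  | succ k ih =>
    intro α hα hl
    obtain ⟨x, hxβ, hαx⟩ := G.exchange β hβ α hα (by omega)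
    obtain ⟨μ, hμ, hpre, hsub, hlen⟩ := ih hαx (by simp; omega)
    refine ⟨μ, hμ, (List.prefix_append α [x]).trans hpre, ?_, hlen⟩
    intro z hz
    rcases hsub hz with h | h
    · rw [letters_append, letters_singleton] at h
      rcases h with h | h
      · exact Or.inl h
      · exact Or.inr (by rwa [Set.mem_singleton_iff.mp h])
    · exact Or.inr h

lemma extend_to {α β : List A} (hα : α ∈ G.lang) (hβ : β ∈ G.lang)
    (h : α.length ≤ β.length) :
    ∃ μ ∈ G.lang, α <+: μ ∧ letters μ ⊆ letters α ∪ letters β ∧ μ.length = β.length :=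
  G.extend_to_aux hβ (β.length - α.length) hα (by omega)

lemma extend_maximal_aux [Fintype A] :
    ∀ k : ℕ, ∀ {α : List A}, α ∈ G.lang → Fintype.card A ≤ α.length + k →
      ∃ ω ∈ G.lang, α <+: ω ∧ G.cont ω = ∅ := by
  intro k
  induction k with
  | zero =>
    intro α hα hcard
    refine ⟨α, hα, List.prefix_refl α, ?_⟩
    ext x
    simp only [cont, Set.mem_setOf_eq, Set.mem_empty_iff_false, iff_false]
    intro hx
    have := G.length_le_card hx
    simp only [List.length_append, List.length_singleton] at this
    omega
  | succ k ih =>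
    intro α hα hcard
    by_cases h : G.cont α = ∅
    · exact ⟨α, hα, List.prefix_refl α, h⟩
    · obtain ⟨x, hx⟩ := Set.nonempty_iff_ne_empty.mpr h
      have hαx : α ++ [x] ∈ G.lang := hx
      obtain ⟨ω, hω, hpre, hc⟩ := ih hαx (by simp; omega)
      exact ⟨ω, hω, (List.prefix_append α [x]).trans hpre, hc⟩

lemma extend_maximal [Fintype A] {α : List A} (hα : α ∈ G.lang) :
    ∃ ω ∈ G.lang, α <+: ω ∧ G.cont ω = ∅ :=
  G.extend_maximal_aux (Fintype.card A) hα (by omega)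

/-! ### Flat lemmas -/

lemma mem_flatOf_self {w : List A} (hw : w ∈ G.lang) : w ∈ G.flatOf w :=
  ⟨hw, rfl⟩

lemma not_longer_of_cont_eq {β β' : List A} (hβ : β ∈ G.lang) (hβ' : β' ∈ G.lang)
    (hc : G.cont β = G.cont β') (hl : β.length < β'.length) : False := by
  obtain ⟨x, hxβ', hβx⟩ := G.exchange β' hβ' β hβ hl
  have hx : x ∈ G.cont β := hβx
  rw [hc] at hx
  have hmem : β' ++ [x] ∈ G.lang := hx
  have hnd := G.simple _ hmem
  rw [List.nodup_append] at hnd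
  exact hnd.2.2 x hxβ' x (by simp) rfl

lemma length_eq_of_mem_flatOf {α β β' : List A} (h : β ∈ G.flatOf α)
    (h' : β' ∈ G.flatOf α) : β.length = β'.length := by
  obtain ⟨hβ, hc⟩ := h
  obtain ⟨hβ', hc'⟩ := h'
  rcases lt_trichotomy β.length β'.length with hl | hl | hl
  · exact absurd (G.not_longer_of_cont_eq hβ hβ' (hc.trans hc'.symm) hl) not_false
  · exact hl
  · exact absurd (G.not_longer_of_cont_eq hβ' hβ (hc'.trans hc.symm) hl) not_false

lemma flatOf_eq_of_mem {α a : List A} (h : a ∈ G.flatOf α) : G.flatOf α = G.flatOf a := by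
  obtain ⟨ha, hc⟩ := h
  ext β
  constructor
  · rintro ⟨hβ, hcβ⟩; exact ⟨hβ, hcβ.trans hc.symm⟩
  · rintro ⟨hβ, hcβ⟩; exact ⟨hβ, hcβ.trans hc⟩

lemma flatCovBy_extend {w : List A} {x : A} (hw : w ∈ G.lang)
    (hwx : w ++ [x] ∈ G.lang) : G.flatCovBy (G.flatOf w) (G.flatOf (w ++ [x])) := by
  have hne : G.flatOf w ≠ G.flatOf (w ++ [x]) := by
    intro h
    have hmem : w ++ [x] ∈ G.flatOf w := h ▸ G.mem_flatOf_self hwx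
    have hc : G.cont (w ++ [x]) = G.cont w := hmem.2
    have hx : x ∈ G.cont w := hwx
    rw [← hc] at hx
    have hmem2 : (w ++ [x]) ++ [x] ∈ G.lang := hx
    have hnd := G.simple _ hmem2
    rw [List.nodup_append] at hnd
    exact hnd.2.2 x (by simp : x ∈ w ++ [x]) x (by simp) rfl
  constructor
  · exact ⟨⟨w, G.mem_flatOf_self hw, [x], hwx, G.mem_flatOf_self hwx⟩, hne⟩
  · rintro E ⟨e, he, rfl⟩ ⟨⟨a, haF, γ, haγ, haγE⟩, hne1⟩ ⟨⟨b, hbE, δ, hbδ, hbδF'⟩, hne2⟩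
    have h1 : a.length = w.length :=
      G.length_eq_of_mem_flatOf haF (G.mem_flatOf_self hw)
    have h2 : b.length = (a ++ γ).length :=
      G.length_eq_of_mem_flatOf hbE haγE
    have h3 : (b ++ δ).length = (w ++ [x]).length :=
      G.length_eq_of_mem_flatOf hbδF' (G.mem_flatOf_self hwx)
    simp only [List.length_append, List.length_singleton] at h1 h2 h3
    rcases Nat.eq_zero_or_pos γ.length with hγ | hγ
    · -- γ = [] : F = E
      have hγnil : γ = [] := List.length_eq_zero_iff.mp hγ
      subst hγnil
      rw [List.append_nil] at haγE
      have e1 : G.flatOf w = G.flatOf a := G.flatOf_eq_of_mem haF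
      have e2 : G.flatOf e = G.flatOf a := G.flatOf_eq_of_mem haγE
      exact hne1 (e1.trans e2.symm)
    · -- δ = [] : E = F'
      have hδnil : δ = [] := List.length_eq_zero_iff.mp (by omega)
      subst hδnil
      rw [List.append_nil] at hbδF'
      have e1 : G.flatOf e = G.flatOf b := G.flatOf_eq_of_mem hbE
      have e2 : G.flatOf (w ++ [x]) = G.flatOf b := G.flatOf_eq_of_mem hbδF'
      exact hne2 (e1.trans e2.symm)

lemma flatOf_eq_of_cont_empty {ω ω' : List A} (hω : ω ∈ G.lang) (hω' : ω' ∈ G.lang)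
    (h : G.cont ω = ∅) (h' : G.cont ω' = ∅) : G.flatOf ω = G.flatOf ω' := by
  ext β
  constructor
  · rintro ⟨hβ, hcβ⟩; exact ⟨hβ, hcβ.trans (h.trans h'.symm)⟩
  · rintro ⟨hβ, hcβ⟩; exact ⟨hβ, hcβ.trans (h'.trans h.symm)⟩

end Greedoid

/-! ### Polymatroid lemmas -/

section Poly

variable {ρ : Set A → ℝ}

lemma rho_mono (hpm : IsPolymatroid ρ) {X Y : Set A} (h : X ⊆ Y) : ρ X ≤ ρ Y :=
  hpm.2.1 X Y h

/-- The marginal inequality: for `V ⊆ Z`, `ρ(Z ∪ {y}) + ρ V ≤ ρ Z + ρ (V ∪ {y})`. -/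
lemma rho_marginal (hpm : IsPolymatroid ρ) {V Z : Set A} (h : V ⊆ Z) (y : A) :
    ρ (Z ∪ {y}) + ρ V ≤ ρ Z + ρ (V ∪ {y}) := by
  have hsub := hpm.2.2 Z (V ∪ {y})
  have h1 : Z ∪ (V ∪ {y}) = Z ∪ {y} := by
    rw [← Set.union_assoc, Set.union_eq_self_of_subset_right h]
  have h2 : ρ V ≤ ρ (Z ∩ (V ∪ {y})) := by
    apply rho_mono hpm
    intro z hz
    exact ⟨h hz, Or.inl hz⟩
  rw [h1] at hsub
  linarith

lemma subset_spanP (ρ : Set A → ℝ) (X : Set A) : X ⊆ spanP ρ X := by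
  intro x hx
  have hxX : X ∪ {x} = X := by
    rw [Set.union_eq_self_of_subset_right]
    simp [hx]
  show ρ (X ∪ {x}) = ρ X
  rw [hxX]

lemma mem_spanP_mono (hpm : IsPolymatroid ρ) {X Y : Set A} (h : X ⊆ Y) :
    spanP ρ X ⊆ spanP ρ Y := by
  intro z hz
  have hz' : ρ (X ∪ {z}) = ρ X := hz
  have h1 := rho_marginal hpm h z
  have h2 : ρ Y ≤ ρ (Y ∪ {z}) := rho_mono hpm (Set.subset_union_left)
  show ρ (Y ∪ {z}) = ρ Y
  linarith

lemma rho_union_of_subset_spanP [Fintype A] (hpm : IsPolymatroid ρ) {X F : Set A}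
    (h : F ⊆ spanP ρ X) : ρ (X ∪ F) = ρ X := by
  refine Set.Finite.induction_on (motive := fun F _ => F ⊆ spanP ρ X → ρ (X ∪ F) = ρ X)
    F (Set.toFinite F) (fun _ => by simp) ?_ h
  intro z F' hzF' hfin ih hsub
  have hz : z ∈ spanP ρ X := hsub (Set.mem_insert z F')
  have hF'sub : F' ⊆ spanP ρ X := fun a ha => hsub (Set.mem_insert_of_mem z ha)
  have ihF := ih hF'sub
  have hset : X ∪ insert z F' = (X ∪ F') ∪ {z} := by
    rw [Set.union_insert, Set.union_singleton]
  rw [hset]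
  have h1 := rho_marginal hpm (Set.subset_union_left : X ⊆ X ∪ F') z
  have hz' : ρ (X ∪ {z}) = ρ X := hz
  have h2 : ρ (X ∪ F') ≤ ρ ((X ∪ F') ∪ {z}) := rho_mono hpm Set.subset_union_left
  linarith

lemma rho_spanP [Fintype A] (hpm : IsPolymatroid ρ) (X : Set A) :
    ρ (spanP ρ X) = ρ X := by
  have h1 : X ∪ spanP ρ X = spanP ρ X :=
    Set.union_eq_self_of_subset_left (subset_spanP ρ X)
  rw [← h1]
  exact rho_union_of_subset_spanP hpm (le_refl _)

lemma closedP_spanP [Fintype A] (hpm : IsPolymatroid ρ) (X : Set A) :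
    ClosedP ρ (spanP ρ X) := by
  apply Set.Subset.antisymm
  · intro z hz
    have hz' : ρ (spanP ρ X ∪ {z}) = ρ (spanP ρ X) := hz
    rw [rho_spanP hpm] at hz'
    have hle : ρ (X ∪ {z}) ≤ ρ (spanP ρ X ∪ {z}) :=
      rho_mono hpm (Set.union_subset_union_left _ (subset_spanP ρ X))
    have hge : ρ X ≤ ρ (X ∪ {z}) := rho_mono hpm Set.subset_union_left
    show ρ (X ∪ {z}) = ρ X
    linarith
  · exact subset_spanP ρ _

lemma spanP_subset_closed [Fintype A] (hpm : IsPolymatroid ρ) {X C : Set A}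
    (hXC : X ⊆ C) (hC : ClosedP ρ C) : spanP ρ X ⊆ C := by
  have := mem_spanP_mono hpm hXC
  rwa [hC] at this

end Poly

/-! ### Representation lemmas -/

section Rep

variable {G : Greedoid A} {ρ : Set A → ℝ}

lemma rho_letters (hpm : IsPolymatroid ρ) (hrep : Represents ρ G)
    {w : List A} (hw : w ∈ G.lang) : ρ (letters w) = (w.length : ℝ) := by
  rcases Nat.eq_zero_or_pos w.length with h0 | hpos
  · have : w = [] := List.length_eq_zero_iff.mp h0
    subst this
    rw [letters_nil, hpm.1]
    simp
  · have hr := ((hrep w).mp hw).2 (w.length - 1) (by omega)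
    have he : w.length - 1 + 1 = w.length := by omega
    rw [he, List.take_length] at hr
    rw [hr]
    norm_cast

/-- The crucial rigidity: the image of a flat under the alignment map is the
polymatroid span of the letters of any word in that flat. -/
lemma phi_flatOf_eq [Fintype A] (hpm : IsPolymatroid ρ)
    {φ : Set (List A) → Set A}
    (h1 : ∀ F, G.IsFlat F → ClosedP ρ (φ F))
    (h3 : ∀ α ∈ G.lang, ρ (letters α) = ρ (φ (G.flatOf α)))
    (h4 : ∀ α ∈ G.lang, letters α ⊆ φ (G.flatOf α))
    {w : List A} (hw : w ∈ G.lang) :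
    φ (G.flatOf w) = spanP ρ (letters w) := by
  have hflat : G.IsFlat (G.flatOf w) := ⟨w, hw, rfl⟩
  have hclosed := h1 _ hflat
  have hρ := h3 w hw
  have hsub := h4 w hw
  apply Set.Subset.antisymm
  · intro z hz
    show ρ (letters w ∪ {z}) = ρ (letters w)
    have hle : ρ (letters w ∪ {z}) ≤ ρ (φ (G.flatOf w)) := by
      apply rho_mono hpm
      intro a ha
      rcases ha with ha | ha
      · exact hsub ha
      · rwa [Set.mem_singleton_iff.mp ha]
    have hge : ρ (letters w) ≤ ρ (letters w ∪ {z}) := rho_mono hpm Set.subset_union_left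
    linarith
  · intro z hz
    have hz' : ρ (letters w ∪ {z}) = ρ (letters w) := hz
    have key : ρ (φ (G.flatOf w) ∪ {z}) = ρ (φ (G.flatOf w)) := by
      have h5 := rho_marginal hpm hsub z
      have hge : ρ (φ (G.flatOf w)) ≤ ρ (φ (G.flatOf w) ∪ {z}) :=
        rho_mono hpm Set.subset_union_left
      linarith
    have : z ∈ spanP ρ (φ (G.flatOf w)) := key
    rwa [hclosed] at this

end Rep

end AuxLemmas


/-- The key step: if `u` is a feasible word inside a closed set `S`, `u ++ [y]` is feasible,
and `y` is in the greedoid span of `S`, then `y ∈ S`. -/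
lemma crux {A : Type*} [Fintype A] (G : Greedoid A) (ρ : Set A → ℝ)
    (hpm : IsPolymatroid ρ) (hrep : Represents ρ G) (hal : Aligned G ρ)
    {S : Set A} (hS : ClosedP ρ S) {u : List A} {y : A}
    (hu : u ∈ G.lang) (huS : letters u ⊆ S) (huy : u ++ [y] ∈ G.lang)
    (hyspan : G.rank (S ∪ {y}) = G.rank S) : y ∈ S := by
  by_contra hy
  obtain ⟨φ, h1, h2, h3, h4, h5⟩ := hal
  obtain ⟨α, hα, hαS, hαlen⟩ := G.exists_basic S
  set r := G.rank S with hr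
  -- extend u to a word μ basic in S
  have hulen : u.length ≤ α.length := by rw [hαlen]; exact G.le_rank hu huS
  obtain ⟨μ, hμ, huμ, hμsub, hμlen⟩ := G.extend_to hu hα hulen
  have hμS : letters μ ⊆ S := by
    intro z hz; rcases hμsub hz with h | h
    · exact huS h
    · exact hαS h
  have hμlen' : μ.length = r := by rw [hμlen, hαlen]
  have hyμ : y ∉ letters μ := fun h => hy (hμS h)
  -- extend μ and u ++ [y] to maximal words
  obtain ⟨ω, hω, hμω, hcω⟩ := G.extend_maximal hμ
  obtain ⟨ω', hω', huyω', hcω'⟩ := G.extend_maximal huy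
  -- equal flats, hence equal spans of letters
  have hflats : G.flatOf ω = G.flatOf ω' := G.flatOf_eq_of_cont_empty hω hω' hcω hcω'
  have hspaneq : spanP ρ (letters ω) = spanP ρ (letters ω') := by
    have e1 := phi_flatOf_eq hpm h1 h3 h4 hω
    have e2 := phi_flatOf_eq hpm h1 h3 h4 hω'
    rw [← e1, ← e2, hflats]
  have hyω : y ∈ spanP ρ (letters ω) := by
    rw [hspaneq]
    exact subset_spanP ρ _ (letters_mono huyω' (by simp [letters] : y ∈ letters (u ++ [y])))
  -- if y is spanned by letters μ we get a contradiction with y ∉ S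
  by_cases hyμ0 : y ∈ spanP ρ (letters μ)
  · exact hy (by have := mem_spanP_mono hpm hμS hyμ0; rwa [hS] at this)
  -- otherwise find the entering step along ω
  set N := ω.length with hN
  set M : ℕ → Set A := fun n => spanP ρ (letters (ω.take n)) with hM
  have hμtake : ω.take μ.length = μ := (List.prefix_iff_eq_take.mp hμω).symm
  have hMn0 : y ∉ M μ.length := by
    rw [hM]; simp only; rw [hμtake]; exact hyμ0
  have hMN : y ∈ M N := by
    rw [hM]; simp only [hN, List.take_length]; exact hyω
  have hlen_μω : μ.length ≤ N := hμω.length_le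
  have hstep : ∃ n, μ.length ≤ n ∧ n + 1 ≤ N ∧ y ∉ M n ∧ y ∈ M (n + 1) := by
    by_contra hno
    push_neg at hno
    have hall : ∀ k, μ.length + k ≤ N → y ∉ M (μ.length + k) := by
      intro k
      induction k with
      | zero => intro _; exact hMn0
      | succ k ih =>
        intro hk
        have h2' := ih (by omega)
        have h3' := hno (μ.length + k) (by omega) (by omega) h2'
        exact h3'
    have hfin := hall (N - μ.length) (by omega)
    rw [Nat.add_sub_cancel' hlen_μω] at hfin
    exact hfin hMN
  obtain ⟨n, hn1, hn2, hyn, hyn1⟩ := hstep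
  -- the two consecutive prefixes of ω
  set a := ω.take n with ha
  have hna : a ∈ G.lang := G.take_mem hω n
  have hnlt : n < ω.length := by omega
  set x := ω.get ⟨n, hnlt⟩ with hx
  have hb : ω.take (n + 1) = a ++ [x] := by
    rw [ha, hx, List.take_succ]
    congr 1
    simp [List.getElem?_eq_getElem hnlt]
  have hnb : a ++ [x] ∈ G.lang := by rw [← hb]; exact G.take_mem hω (n + 1)
  have halen : a.length = n := by rw [ha, List.length_take]; omega
  have hρa : ρ (letters a) = (n : ℝ) := by rw [rho_letters hpm hrep hna, halen]
  have hρb : ρ (letters (a ++ [x])) = (n : ℝ) + 1 := by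
    rw [rho_letters hpm hrep hnb]
    simp [halen]
  -- the covering property between the spans of the two prefixes
  have hcov := h5 _ _ ⟨a, hna, rfl⟩ ⟨a ++ [x], hnb, rfl⟩ (G.flatCovBy_extend hna hnb)
  rw [phi_flatOf_eq hpm h1 h3 h4 hna, phi_flatOf_eq hpm h1 h3 h4 hnb] at hcov
  obtain ⟨hcl1, hcl2, hlt, hmax⟩ := hcov
  set T := spanP ρ (letters a ∪ {y}) with hT
  have hTclosed : ClosedP ρ T := closedP_spanP hpm _
  have hMn : M n = spanP ρ (letters a) := rfl
  have hsub1 : spanP ρ (letters a) ⊆ T := mem_spanP_mono hpm Set.subset_union_left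
  have hyT : y ∈ T := subset_spanP ρ _ (Or.inr rfl)
  have hynMa : y ∉ spanP ρ (letters a) := by rw [← hMn]; exact hyn
  have hss1 : spanP ρ (letters a) ⊂ T :=
    Set.ssubset_iff_subset_ne.mpr ⟨hsub1, fun he => hynMa (he ▸ hyT)⟩
  have hsub2 : T ⊆ spanP ρ (letters (a ++ [x])) := by
    apply spanP_subset_closed hpm _ (closedP_spanP hpm _)
    intro z hz
    rcases hz with hz | hz
    · exact subset_spanP ρ _ (by rw [letters_append]; exact Or.inl hz)
    · rw [Set.mem_singleton_iff.mp hz]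
      have : y ∈ M (n + 1) := hyn1
      rw [hM] at this
      simp only at this
      rwa [hb] at this
  have hTeq : T = spanP ρ (letters (a ++ [x])) := by
    by_contra hne
    exact hmax T hTclosed hss1 (Set.ssubset_iff_subset_ne.mpr ⟨hsub2, hne⟩)
  -- rank computation: ρ (letters a ∪ {y}) = n + 1
  have hρT : ρ (letters a ∪ {y}) = (n : ℝ) + 1 := by
    have e1 : ρ T = ρ (letters a ∪ {y}) := rho_spanP hpm _
    have e2 : ρ (spanP ρ (letters (a ++ [x]))) = ρ (letters (a ++ [x])) := rho_spanP hpm _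
    rw [hTeq, e2, hρb] at e1
    linarith
  -- letters μ ⊆ letters a
  have hμa : letters μ ⊆ letters a := by
    have : μ = a.take μ.length := by
      rw [ha, List.take_take, min_eq_left hn1, hμtake]
    rw [this]
    exact letters_take_subset a μ.length
  have hρμ : ρ (letters μ) = (r : ℝ) := by rw [rho_letters hpm hrep hμ, hμlen']
  have hρu : ρ (letters u) = (u.length : ℝ) := rho_letters hpm hrep hu
  have hρuy : ρ (letters u ∪ {y}) = (u.length : ℝ) + 1 := by
    have h' := rho_letters hpm hrep huy
    rw [letters_append, letters_singleton] at h'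
    rw [h']
    simp
  have hm1 := rho_marginal hpm hμa y
  have hm2 := rho_marginal hpm (letters_mono huμ) y
  -- conclude ρ (letters μ ∪ {y}) = r + 1
  have hkey : ρ (letters μ ∪ {y}) = (r : ℝ) + 1 := by
    rw [hρT, hρa, hρμ] at hm1
    rw [hρμ, hρu, hρuy] at hm2
    linarith
  -- hence μ ++ [y] is feasible
  have hfeas : μ ++ [y] ∈ G.lang := by
    rw [hrep]
    constructor
    · rw [List.nodup_append]
      refine ⟨G.simple μ hμ, List.nodup_singleton y, ?_⟩
      intro z hz b hb hzb
      rw [List.mem_singleton] at hb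
      subst hb; subst hzb
      exact hyμ hz
    · intro i hi
      rw [List.length_append, List.length_singleton] at hi
      rcases Nat.lt_or_ge i μ.length with hilt | hige
      · rw [List.take_append_of_le_length (by omega)]
        exact ((hrep μ).mp hμ).2 i hilt
      · have hieq : i = μ.length := by omega
        subst hieq
        rw [List.take_of_length_le (by simp), letters_append, letters_singleton, hkey, hμlen']
  -- contradiction with the greedoid rank of S ∪ {y}
  have hsubSy : letters (μ ++ [y]) ⊆ S ∪ {y} := by
    rw [letters_append, letters_singleton]
    intro z hz
    rcases hz with hz | hz
    · exact Or.inl (hμS hz)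
    · exact Or.inr hz
  have hle := G.le_rank hfeas hsubSy
  rw [hyspan] at hle
  rw [List.length_append, List.length_singleton, hμlen'] at hle
  omega

/-- In a normal greedoid with an aligned representation, every closed set of the
representation contains its kernel. -/
theorem closed_contains_kernel {A : Type*} [Fintype A] (G : Greedoid A)
    (hnorm : G.Normal) (ρ : Set A → ℝ)
    (hpm : IsPolymatroid ρ) (hrep : Represents ρ G) (hal : Aligned G ρ) :
    ∀ S : Set A, ClosedP ρ S → G.kernel S ⊆ S := by
  obtain ⟨φ, h1, h2, h3, h4, h5⟩ := hal
  intro S hS y hy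
  obtain ⟨β, hβ, hβspan, hyβ⟩ := hy
  -- show each prefix of β has its letters inside S
  have hpre : ∀ n : ℕ, letters (β.take n) ⊆ S := by
    intro n
    induction n with
    | zero => simp [letters_nil]
    | succ n ih =>
      rcases Nat.lt_or_ge n β.length with hn | hn
      · have htake : β.take (n + 1) = β.take n ++ [β.get ⟨n, hn⟩] := by
          rw [List.take_succ]
          congr 1
          simp [List.getElem?_eq_getElem hn]
        have hun : β.take n ∈ G.lang := G.take_mem hβ n
        have huny : β.take n ++ [β.get ⟨n, hn⟩] ∈ G.lang := by
          rw [← htake]; exact G.take_mem hβ (n + 1)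
        have hget : β.get ⟨n, hn⟩ ∈ G.spanR S :=
          hβspan (by simp [letters] : β.get ⟨n, hn⟩ ∈ letters β)
        have hmem : β.get ⟨n, hn⟩ ∈ S :=
          crux G ρ hpm hrep ⟨φ, h1, h2, h3, h4, h5⟩ hS hun ih huny hget
        rw [htake, letters_append, letters_singleton]
        intro z hz
        rcases hz with hz | hz
        · exact ih hz
        · rw [Set.mem_singleton_iff.mp hz]; exact hmem
      · rw [List.take_of_length_le (by omega)]
        have := ih
        rwa [List.take_of_length_le (by omega)] at this
  have := hpre β.length
  rw [List.take_length] at this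
  exact this hyβ


end PaperPG
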